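/- arXiv:1005.3758 — 2 statements merged into one kernel-verified Lean document; each statement's English description precedes it below -/
import Mathlib

section
/- Let q, β ∈ ℝ with 0 < q < β, and define a₀ := 0 and a_n := q·e^{a_{n−1}} − β for n ≥ 1. Then the equation q·e^x − β = x has a unique solution x₀ < 0; the sequence (a_n)_{n≥1} is strictly negative, strictly decreasing and converges to x₀; and d := q·e^{x₀} satisfies 0 < d < 1. Moreover, defining the linear-recursion approximation ua₀ := 0 and ua_n := x₀·(1 − d) + d·ua_{n−1} + (1/2)·x₀²·d^{2n−1} for n ≥ 1, one has: (a) ua_n < a_n for all n ≥ 1; (b) the sequence (ua_n)_{n≥1} is strictly decreasing; (c) lim_{n→∞} ua_n = x₀. -/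
open Real Filter

/-- The recursion `a₀ = 0`, `a_{n+1} = q·e^{a_n} − β`. -/
noncomputable def aSeq (q β : ℝ) : ℕ → ℝ
  | 0 => 0
  | n + 1 => q * Real.exp (aSeq q β n) - β

/-- The inhomogeneous linear "tangent-line" approximation:
`ua₀ = 0`, `ua_n = x₀·(1−d) + d·ua_{n−1} + (1/2)·x₀²·d^{2n−1}`. -/
noncomputable def uaSeq (x₀ d : ℝ) : ℕ → ℝ
  | 0 => 0
  | n + 1 => x₀ * (1 - d) + d * uaSeq x₀ d n + (1 / 2) * x₀ ^ 2 * d ^ (2 * n + 1)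

lemma cubic_le_exp {t : ℝ} (ht : 0 ≤ t) : 1 + t + t ^ 2 / 2 + t ^ 3 / 6 ≤ Real.exp t := by
  have h := Real.sum_le_exp_of_nonneg ht 4
  have h2 : ∑ i ∈ Finset.range 4, t ^ i / (Nat.factorial i) = 1 + t + t ^ 2 / 2 + t ^ 3 / 6 := by
    simp [Finset.sum_range_succ, Nat.factorial]
  linarith [h2 ▸ h]

lemma quad_lt_exp {t : ℝ} (ht : 0 < t) : 1 + t + t ^ 2 / 2 < Real.exp t := by
  nlinarith [cubic_le_exp ht.le, pow_pos ht 3]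

lemma quad_le_exp {t : ℝ} (ht : 0 ≤ t) : 1 + t + t ^ 2 / 2 ≤ Real.exp t :=
  Real.quadratic_le_exp_of_nonneg ht

/-- strict chord inequality for `exp` on `[x₀, 0]`. -/
lemma chord_lt {x₀ x : ℝ} (hx0 : x₀ < 0) (h1 : x₀ < x) (h2 : x < 0) :
    Real.exp x < (x / x₀) * Real.exp x₀ + (1 - x / x₀) := by
  have hne : x₀ ≠ (0:ℝ) := hx0.ne
  have ht0 : 0 < x / x₀ := div_pos_of_neg_of_neg h2 hx0
  have ht1 : x / x₀ < 1 := by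
    have h3 : (x - x₀) / x₀ < 0 := div_neg_of_pos_of_neg (by linarith) hx0
    have h4 : (x - x₀) / x₀ = x / x₀ - 1 := by field_simp
    linarith
  have key := strictConvexOn_exp.2 (Set.mem_univ x₀) (Set.mem_univ (0:ℝ)) hne ht0
    (by linarith : (0:ℝ) < 1 - x / x₀) (by ring)
  simp only [smul_eq_mul, mul_zero, add_zero, Real.exp_zero, mul_one] at key
  rw [div_mul_cancel₀ x hne] at key
  linarith

/-- chord inequality for `exp` on `[x₀, 0]`. -/
lemma chord_le {x₀ x : ℝ} (hx0 : x₀ < 0) (h1 : x₀ ≤ x) (h2 : x ≤ 0) :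
    Real.exp x ≤ (x / x₀) * Real.exp x₀ + (1 - x / x₀) := by
  have hne : x₀ ≠ (0:ℝ) := hx0.ne
  have ht0 : 0 ≤ x / x₀ := by rw [div_nonneg_iff]; right; exact ⟨h2, hx0.le⟩
  have ht1 : x / x₀ ≤ 1 := by
    have h3 : (x - x₀) / x₀ ≤ 0 := div_nonpos_of_nonneg_of_nonpos (by linarith) hx0.le
    have h4 : (x - x₀) / x₀ = x / x₀ - 1 := by field_simp
    linarith
  have key := convexOn_exp.2 (Set.mem_univ x₀) (Set.mem_univ (0:ℝ)) ht0
    (by linarith : (0:ℝ) ≤ 1 - x / x₀) (by ring)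
  simp only [smul_eq_mul, mul_zero, add_zero, Real.exp_zero, mul_one] at key
  rw [div_mul_cancel₀ x hne] at key
  linarith

set_option maxHeartbeats 1000000 in
/-- For `0 < q < β`:  the equation `q·e^x − β = x` has a unique negative
solution `x₀`; the sequence `(a_n)_{n≥1}` is strictly negative, strictly decreasing and
converges to `x₀`; `d := q·e^{x₀} ∈ (0,1)`; and the linear-recursion approximation `ua`
satisfies `ua_n < a_n` for `n ≥ 1`, is strictly decreasing, and converges to `x₀`. -/
theorem aSeq_and_tangent_approx (q β : ℝ) (hq : 0 < q) (hqβ : q < β) :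
    ∃ x₀ : ℝ, x₀ < 0 ∧ q * Real.exp x₀ - β = x₀ ∧
      (∀ y : ℝ, y < 0 → q * Real.exp y - β = y → y = x₀) ∧
      (∀ n : ℕ, 1 ≤ n → aSeq q β n < 0) ∧
      (∀ n : ℕ, 1 ≤ n → aSeq q β (n + 1) < aSeq q β n) ∧
      Tendsto (aSeq q β) atTop (nhds x₀) ∧
      (0 < q * Real.exp x₀ ∧ q * Real.exp x₀ < 1) ∧
      (∀ n : ℕ, 1 ≤ n → uaSeq x₀ (q * Real.exp x₀) n < aSeq q β n) ∧
      (∀ n : ℕ, 1 ≤ n → uaSeq x₀ (q * Real.exp x₀) (n + 1) < uaSeq x₀ (q * Real.exp x₀) n) ∧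
      Tendsto (uaSeq x₀ (q * Real.exp x₀)) atTop (nhds x₀) := by
  have hβ0 : 0 < β := hq.trans hqβ
  -- Existence of the fixed point via IVT
  obtain ⟨x₀, hx₀mem, hroot0⟩ :
      ∃ x ∈ Set.Icc (-β) 0, q * Real.exp x - β - x = (0:ℝ) := by
    have hcont : ContinuousOn (fun x : ℝ => q * Real.exp x - β - x) (Set.Icc (-β) 0) :=
      (((continuous_const.mul Real.continuous_exp).sub continuous_const).sub
        continuous_id).continuousOn
    have h0 : (0:ℝ) ∈ Set.Icc ((fun x : ℝ => q * Real.exp x - β - x) 0)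
        ((fun x : ℝ => q * Real.exp x - β - x) (-β)) := by
      constructor
      · simp only [Real.exp_zero, mul_one, sub_zero]
        linarith
      · simp only [sub_neg_eq_add]
        have : 0 < q * Real.exp (-β) := mul_pos hq (Real.exp_pos _)
        linarith
    obtain ⟨x, hx, hfx⟩ := intermediate_value_Icc' (by linarith : -β ≤ (0:ℝ)) hcont h0
    exact ⟨x, hx, hfx⟩
  have hfix : q * Real.exp x₀ - β = x₀ := by linarith
  have hx₀0 : x₀ < 0 := by
    rcases lt_or_eq_of_le hx₀mem.2 with h | h
    · exact h
    · exfalso; rw [h] at hfix; simp at hfix; linarith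
  set d := q * Real.exp x₀ with hd_def
  have hd0 : 0 < d := mul_pos hq (Real.exp_pos _)
  have hqe : ∀ z : ℝ, q * Real.exp z = d * Real.exp (z - x₀) := by
    intro z
    rw [hd_def, mul_assoc, ← Real.exp_add]
    ring_nf
  have hd_exp : q = d * Real.exp (-x₀) := by
    have := hqe 0
    simpa using this
  have hβd : β = d - x₀ := by linarith
  have hs0 : 0 < -x₀ := neg_pos.2 hx₀0
  -- generic: at any negative root the slope is < 1
  have hslope : ∀ y, y < 0 → q * Real.exp y - β = y → q * Real.exp y < 1 := by
    intro y hy hroot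
    have hp : 0 < q * Real.exp y := mul_pos hq (Real.exp_pos _)
    have he2 : (q * Real.exp y) * Real.exp (-y) = q := by
      rw [mul_assoc, ← Real.exp_add]; simp
    have hexp : (-y) + 1 < Real.exp (-y) := Real.add_one_lt_exp (by linarith)
    have h2 : (q * Real.exp y) * ((-y) + 1) < (q * Real.exp y) * Real.exp (-y) :=
      mul_lt_mul_of_pos_left hexp hp
    nlinarith [h2, he2, hy, hroot, hqβ]
  have hd1 : d < 1 := hslope x₀ hx₀0 hfix
  -- uniqueness of the negative root
  have haux : ∀ r1 r2 : ℝ, r2 < 0 → q * Real.exp r1 - β = r1 → q * Real.exp r2 - β = r2 →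
      ¬ r1 < r2 := by
    intro r1 r2 h2 e1 e2 hlt
    have hp2 : 0 < q * Real.exp r2 := mul_pos hq (Real.exp_pos _)
    have hs2 : q * Real.exp r2 < 1 := hslope r2 h2 e2
    have he : (q * Real.exp r2) * Real.exp (r1 - r2) = q * Real.exp r1 := by
      rw [mul_assoc, ← Real.exp_add]; ring_nf
    have hexp : (r1 - r2) + 1 < Real.exp (r1 - r2) := Real.add_one_lt_exp (by linarith)
    have h3 : (q * Real.exp r2) * ((r1 - r2) + 1) < (q * Real.exp r2) * Real.exp (r1 - r2) :=
      mul_lt_mul_of_pos_left hexp hp2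
    have hprod : 0 < (r2 - r1) * (1 - q * Real.exp r2) :=
      mul_pos (by linarith) (by linarith)
    nlinarith [h3, he, hprod, e1, e2]
  have huniq : ∀ y, y < 0 → q * Real.exp y - β = y → y = x₀ := by
    intro y hy hr
    rcases lt_trichotomy y x₀ with h | h | h
    · exact absurd h (haux y x₀ hx₀0 hr hfix)
    · exact h
    · exact absurd h (haux x₀ y hy hfix hr)
  -- recursion equations
  have ha_succ : ∀ n, aSeq q β (n + 1) = q * Real.exp (aSeq q β n) - β := fun n => rfl
  have hu_succ : ∀ n, uaSeq x₀ d (n + 1)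
      = x₀ * (1 - d) + d * uaSeq x₀ d n + (1 / 2) * x₀ ^ 2 * d ^ (2 * n + 1) := fun n => rfl
  -- tangent-line lower bound for a
  have hA : ∀ n, x₀ - x₀ * d ^ n ≤ aSeq q β n := by
    intro n
    induction n with
    | zero => simp [aSeq]
    | succ n ih =>
      have hdp : 0 < d ^ n := pow_pos hd0 n
      have ht : 0 ≤ aSeq q β n - x₀ := by nlinarith
      have hexp : (aSeq q β n - x₀) + 1 ≤ Real.exp (aSeq q β n - x₀) := Real.add_one_le_exp _
      have h5 : d * ((aSeq q β n - x₀) + 1) ≤ d * Real.exp (aSeq q β n - x₀) :=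
        mul_le_mul_of_nonneg_left hexp hd0.le
      have h7 : d * (-x₀ * d ^ n) ≤ d * (aSeq q β n - x₀) :=
        mul_le_mul_of_nonneg_left (by linarith) hd0.le
      have h8 : d * (-x₀ * d ^ n) = -x₀ * d ^ (n + 1) := by ring
      rw [ha_succ, hqe (aSeq q β n)]
      linarith [h5, h7, h8, hβd]
  have hx₀lt : ∀ n, x₀ < aSeq q β n := by
    intro n
    have h1 := hA n
    have h2 : 0 < -x₀ * d ^ n := mul_pos hs0 (pow_pos hd0 n)
    linarith
  -- the map strictly decreases on (x₀, 0]
  have hchord : ∀ x, x₀ < x → x ≤ 0 → q * Real.exp x - β < x := by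
    intro x h1 h2
    rcases eq_or_lt_of_le h2 with rfl | h2
    · simp only [Real.exp_zero, mul_one]; linarith
    · have hne : x₀ ≠ (0:ℝ) := hx₀0.ne
      have key := chord_lt hx₀0 h1 h2
      have hmul : q * Real.exp x < q * ((x / x₀) * Real.exp x₀ + (1 - x / x₀)) :=
        mul_lt_mul_of_pos_left key hq
      have hxx : (x / x₀) * x₀ = x := div_mul_cancel₀ x hne
      have ht1 : x / x₀ < 1 := by
        have h3 : (x - x₀) / x₀ < 0 := div_neg_of_pos_of_neg (by linarith) hx₀0
        have h4 : (x - x₀) / x₀ = x / x₀ - 1 := by field_simp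
        linarith
      have hexpand : q * ((x / x₀) * Real.exp x₀ + (1 - x / x₀))
          = (x / x₀) * d + (1 - x / x₀) * q := by rw [hd_def]; ring
      have hmul2 : q * Real.exp x < (x / x₀) * d + (1 - x / x₀) * q := hexpand ▸ hmul
      have h6 : (x / x₀) * d + (1 - x / x₀) * q < (x / x₀) * d + (1 - x / x₀) * β := by
        have h9 : 0 < 1 - x / x₀ := by linarith
        nlinarith [mul_lt_mul_of_pos_left hqβ h9]
      have h7 : (x / x₀) * d + (1 - x / x₀) * β = β + x := by
        linear_combination hxx - (x / x₀) * hβd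
      linarith [hmul2, h6, h7]
  have hQ : ∀ n, aSeq q β (n + 1) < 0 ∧ aSeq q β (n + 1) < aSeq q β n := by
    intro n
    induction n with
    | zero =>
      have h1 : aSeq q β 1 = q - β := by simp [aSeq]
      have h0 : aSeq q β 0 = 0 := rfl
      rw [h1, h0]; constructor <;> linarith
    | succ n ih =>
      have h := hchord (aSeq q β (n + 1)) (hx₀lt (n + 1)) ih.1.le
      rw [← ha_succ] at h
      exact ⟨h.trans ih.1, h⟩
  have ha_le0 : ∀ n, aSeq q β n ≤ 0 := by
    intro n
    cases n with
    | zero => exact le_of_eq rfl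
    | succ n => exact (hQ n).1.le
  -- chord upper bound for a and convergence
  have hqd : 0 ≤ q - d := by
    have h1 : Real.exp x₀ < Real.exp 0 := Real.exp_lt_exp.2 hx₀0
    rw [Real.exp_zero] at h1
    nlinarith
  set ρ := (q - d) / (-x₀) with hρ_def
  have hρ0 : 0 ≤ ρ := div_nonneg hqd hs0.le
  have hρ1 : ρ < 1 := (div_lt_one hs0).2 (by linarith)
  have hchord2 : ∀ x, x₀ ≤ x → x ≤ 0 → q * Real.exp x - β ≤ x₀ + ρ * (x - x₀) := by
    intro x h1 h2
    have key := chord_le hx₀0 h1 h2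
    have hmul : q * Real.exp x ≤ q * ((x / x₀) * Real.exp x₀ + (1 - x / x₀)) :=
      mul_le_mul_of_nonneg_left key hq.le
    have hxx : (x / x₀) * x₀ = x := div_mul_cancel₀ x hx₀0.ne
    have hexpand : q * ((x / x₀) * Real.exp x₀ + (1 - x / x₀))
        = (x / x₀) * d + (1 - x / x₀) * q := by rw [hd_def]; ring
    have hmul2 : q * Real.exp x ≤ (x / x₀) * d + (1 - x / x₀) * q := hexpand ▸ hmul
    have hρx : ρ * (-x₀) = q - d := div_mul_cancel₀ _ hs0.ne'
    have heq : x₀ + ρ * (x - x₀) = (x / x₀) * d + (1 - x / x₀) * q - β := by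
      linear_combination hβd + (1 - x / x₀) * hρx - ρ * hxx
    linarith [hmul2, heq]
  have hUB : ∀ n, aSeq q β n ≤ x₀ + (-x₀) * ρ ^ n := by
    intro n
    induction n with
    | zero => simp [aSeq]
    | succ n ih =>
      have h1 := hchord2 (aSeq q β n) (hx₀lt n).le (ha_le0 n)
      have h2 : ρ * (aSeq q β n - x₀) ≤ ρ * ((-x₀) * ρ ^ n) :=
        mul_le_mul_of_nonneg_left (by linarith) hρ0
      have h3 : (-x₀) * ρ ^ (n + 1) = ρ * ((-x₀) * ρ ^ n) := by ring
      rw [ha_succ]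
      linarith [h1, h2, h3]
  have htendA : Tendsto (aSeq q β) atTop (nhds x₀) := by
    have h1 : Tendsto (fun n : ℕ => x₀ + (-x₀) * ρ ^ n) atTop (nhds (x₀ + (-x₀) * 0)) :=
      tendsto_const_nhds.add ((tendsto_pow_atTop_nhds_zero_of_lt_one hρ0 hρ1).const_mul _)
    rw [mul_zero, add_zero] at h1
    exact tendsto_of_tendsto_of_tendsto_of_le_of_le tendsto_const_nhds h1
      (fun n => (hx₀lt n).le) hUB
  -- second-order lower bound : a_{n+1} ≥ x₀(1-d) + d a_n + (1/2) x₀² d^{2n+1}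
  have hA2 : ∀ n, x₀ * (1 - d) + d * aSeq q β n + (1 / 2) * x₀ ^ 2 * d ^ (2 * n + 1)
      ≤ aSeq q β (n + 1) := by
    intro n
    have ht1 : -x₀ * d ^ n ≤ aSeq q β n - x₀ := by have := hA n; linarith
    have ht0 : 0 ≤ -x₀ * d ^ n := mul_nonneg hs0.le (pow_pos hd0 n).le
    have hexp : 1 + (aSeq q β n - x₀) + (aSeq q β n - x₀) ^ 2 / 2
        ≤ Real.exp (aSeq q β n - x₀) := quad_le_exp (le_trans ht0 ht1)
    have hsq : (-x₀ * d ^ n) * (-x₀ * d ^ n) ≤ (aSeq q β n - x₀) * (aSeq q β n - x₀) :=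
      mul_self_le_mul_self ht0 ht1
    have H1 : d * (1 + (aSeq q β n - x₀) + (aSeq q β n - x₀) ^ 2 / 2)
        ≤ d * Real.exp (aSeq q β n - x₀) := mul_le_mul_of_nonneg_left hexp hd0.le
    have H2 : d * ((-x₀ * d ^ n) * (-x₀ * d ^ n))
        ≤ d * ((aSeq q β n - x₀) * (aSeq q β n - x₀)) :=
      mul_le_mul_of_nonneg_left hsq hd0.le
    have hpow : (1 / 2) * x₀ ^ 2 * d ^ (2 * n + 1) = (d * ((-x₀ * d ^ n) * (-x₀ * d ^ n))) / 2 := by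
      rw [two_mul, pow_succ, pow_add]; ring
    rw [ha_succ, hqe (aSeq q β n), hpow]
    nlinarith [H1, H2, hβd]
  -- base case : ua 1 < a 1
  have base1 : uaSeq x₀ d 1 < aSeq q β 1 := by
    have h1 : aSeq q β 1 = q - β := by simp [aSeq]
    have hu1 : uaSeq x₀ d 1 = x₀ * (1 - d) + d * 0 + (1 / 2) * x₀ ^ 2 * d ^ (2 * 0 + 1) := rfl
    have hexp : 1 + (-x₀) + (-x₀) ^ 2 / 2 < Real.exp (-x₀) := quad_lt_exp hs0
    have h2 : d * (1 + (-x₀) + (-x₀) ^ 2 / 2) < d * Real.exp (-x₀) :=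
      mul_lt_mul_of_pos_left hexp hd0
    have hpw : d ^ (2 * 0 + 1) = d := by norm_num
    rw [h1, hu1, hpw]
    linarith [h2, hd_exp, hβd]
  have haU : ∀ n : ℕ, 1 ≤ n → uaSeq x₀ d n < aSeq q β n := by
    intro n hn
    induction n, hn using Nat.le_induction with
    | base => exact base1
    | succ n hn ih =>
      have h2 : d * uaSeq x₀ d n < d * aSeq q β n := mul_lt_mul_of_pos_left ih hd0
      have h3 := hA2 n
      rw [hu_succ n]
      linarith [h2, h3]
  -- key numeric inequality : d·(-x₀) < 2(1-d)
  have hkey : d * (-x₀) < 2 * (1 - d) := by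
    have hexp := quad_le_exp hs0.le
    have h1 : d * (1 + (-x₀) + (-x₀) ^ 2 / 2) ≤ q := by
      rw [hd_exp]
      exact mul_le_mul_of_nonneg_left hexp hd0.le
    nlinarith [h1, hs0, hd0, hβd, hqβ]
  -- base case for the monotonicity of ua
  have base2 : uaSeq x₀ d 2 < uaSeq x₀ d 1 := by
    have h1 : uaSeq x₀ d 1 = x₀ * (1 - d) + d * 0 + (1 / 2) * x₀ ^ 2 * d ^ (2 * 0 + 1) := rfl
    have h2 : uaSeq x₀ d 2
        = x₀ * (1 - d) + d * uaSeq x₀ d 1 + (1 / 2) * x₀ ^ 2 * d ^ (2 * 1 + 1) := rfl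
    have h3 : x₀ ^ 2 * (d + d ^ 2 - 1) < (-x₀) * (2 * (1 - d)) := by
      rcases le_or_gt (d + d ^ 2 - 1) 0 with h | h
      · nlinarith [mul_pos hs0 (by nlinarith : (0:ℝ) < 2 * (1 - d)), sq_nonneg x₀]
      · have h4 : x₀ ^ 2 * (d + d ^ 2 - 1) < x₀ ^ 2 * d := by
          have h5 : d + d ^ 2 - 1 < d := by nlinarith
          have hx2 : 0 < x₀ ^ 2 := by nlinarith [mul_pos hs0 hs0]
          exact mul_lt_mul_of_pos_left h5 hx2
        have h5 : x₀ ^ 2 * d = (-x₀) * (d * (-x₀)) := by ring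
        have h6 : (-x₀) * (d * (-x₀)) < (-x₀) * (2 * (1 - d)) :=
          mul_lt_mul_of_pos_left hkey hs0
        linarith
    have e1 : d ^ (2 * 0 + 1) = d := by norm_num
    have e2 : d ^ (2 * 1 + 1) = d * d * d := by norm_num [pow_succ]
    rw [h1, h2, e1, e2]
    nlinarith [h3, hd0]
  have hUdec : ∀ n : ℕ, 1 ≤ n → uaSeq x₀ d (n + 1) < uaSeq x₀ d n := by
    intro n hn
    induction n, hn using Nat.le_induction with
    | base => exact base2
    | succ n hn ih =>
      have hmul : d * uaSeq x₀ d (n + 1) < d * uaSeq x₀ d n := mul_lt_mul_of_pos_left ih hd0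
      have hpw : d ^ (2 * (n + 1) + 1) < d ^ (2 * n + 1) :=
        pow_lt_pow_right_of_lt_one₀ hd0 hd1 (by omega)
      have hc : (0:ℝ) ≤ (1 / 2) * x₀ ^ 2 := by positivity
      have hcc : (1 / 2) * x₀ ^ 2 * d ^ (2 * (n + 1) + 1)
          ≤ (1 / 2) * x₀ ^ 2 * d ^ (2 * n + 1) := mul_le_mul_of_nonneg_left hpw.le hc
      linarith [hmul, hcc, hu_succ (n + 1), hu_succ n]
  -- bounds for ua and convergence
  have hu_lb : ∀ n, x₀ ≤ uaSeq x₀ d n := by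
    intro n
    induction n with
    | zero => exact hx₀0.le
    | succ n ih =>
      have h1 : d * x₀ ≤ d * uaSeq x₀ d n := mul_le_mul_of_nonneg_left ih hd0.le
      have h2 : (0:ℝ) ≤ (1 / 2) * x₀ ^ 2 * d ^ (2 * n + 1) := by positivity
      rw [hu_succ]
      nlinarith [h1, h2]
  have hu_ub : ∀ n, uaSeq x₀ d n ≤ x₀ + d ^ n * ((-x₀) + (1 / 2) * x₀ ^ 2 * n) := by
    intro n
    induction n with
    | zero => norm_num [uaSeq]
    | succ n ih =>
      have h1 : d * uaSeq x₀ d n ≤ d * (x₀ + d ^ n * ((-x₀) + (1 / 2) * x₀ ^ 2 * n)) :=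
        mul_le_mul_of_nonneg_left ih hd0.le
      have hple : d ^ (2 * n + 1) ≤ d ^ n * d := by
        rw [← pow_succ]
        exact pow_le_pow_of_le_one hd0.le hd1.le (by omega)
      have hc : (0:ℝ) ≤ (1 / 2) * x₀ ^ 2 := by positivity
      have h2 : (1 / 2) * x₀ ^ 2 * d ^ (2 * n + 1) ≤ (1 / 2) * x₀ ^ 2 * (d ^ n * d) :=
        mul_le_mul_of_nonneg_left hple hc
      rw [hu_succ]
      push_cast
      rw [pow_succ d n]
      linarith [h1, h2]
  have htendU : Tendsto (uaSeq x₀ d) atTop (nhds x₀) := by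
    have t1 : Tendsto (fun n : ℕ => d ^ n) atTop (nhds 0) :=
      tendsto_pow_atTop_nhds_zero_of_lt_one hd0.le hd1
    have t2 : Tendsto (fun n : ℕ => (n : ℝ) * d ^ n) atTop (nhds 0) :=
      tendsto_self_mul_const_pow_of_lt_one hd0.le hd1
    have h2 : Tendsto (fun n : ℕ => x₀ + d ^ n * ((-x₀) + (1 / 2) * x₀ ^ 2 * n)) atTop
        (nhds x₀) := by
      have h3 : Tendsto
          (fun n : ℕ => x₀ + (d ^ n * (-x₀) + (1 / 2) * x₀ ^ 2 * ((n : ℝ) * d ^ n)))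
          atTop (nhds (x₀ + ((0:ℝ) * (-x₀) + (1 / 2) * x₀ ^ 2 * 0))) :=
        tendsto_const_nhds.add ((t1.mul_const _).add (t2.const_mul _))
      rw [zero_mul, mul_zero, add_zero, add_zero] at h3
      refine h3.congr fun n => ?_
      ring
    exact tendsto_of_tendsto_of_tendsto_of_le_of_le tendsto_const_nhds h2 hu_lb hu_ub
  refine ⟨x₀, hx₀0, ?_, huniq, ?_, fun n _ => (hQ n).2, htendA, ?_, ?_, ?_, ?_⟩
  · rw [← hd_def]; exact hfix
  · intro n hn
    cases n with
    | zero => omega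
    | succ n => exact (hQ n).1
  · rw [← hd_def]; exact ⟨hd0, hd1⟩
  · rw [← hd_def]; exact haU
  · rw [← hd_def]; exact hUdec
  · rw [← hd_def]; exact htendU
end

section
/- Let q, β ∈ ℝ with 0 < q < β, define a₀ := 0 and a_n := q·e^{a_{n−1}} − β, let x₀ < 0 be the unique solution of q·e^x − β = x, and set d_T := q·e^{x₀} and d_S := (x₀ − (q − β))/x₀. Then 0 < d_T < d_S < 1, and defining oa₀ := 0 and oa_n := (q − β) + d_S·oa_{n−1} − (1/2)·x₀²·d_T^n·(1 − d_S^{n−1}) for n ≥ 1, one has: (a) oa_n ≥ a_n for all n ≥ 1, with equality if and only if n = 1; (b) the sequence (oa_n)_{n≥1} is strictly decreasing; (c) lim_{n→∞} oa_n = lim_{n→∞} a_n = x₀. -/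
/-!
Write `f x = q e^x − β`. By convexity `f` lies above its tangent of slope `dT = f'(x₀)` at the
fixed point `x₀`, and since `f'' ≥ dT` on `[x₀, 0]` it lies below the secant of slope `dS` through
`(x₀, x₀)` and `(0, q − β)` by at least `dT/2 · (x − x₀)(−x)`. So `f` maps `[x₀, 0]` into itself
and `−x₀ dT^n ≤ a_n − x₀ ≤ −x₀ dS^n`, which squeezes `a_n` to `x₀`. Inserting these bounds into
the curvature term gives `a_{n+1} − x₀ ≤ dS (a_n − x₀) − ½ x₀² dT^{n+1} (1 − dS^{n})`, the
recursion of `oa`; hence `oa` dominates `a`, strictly from `n = 2` on because `dT < dS` makes the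
lower bound strict. Finally `oa_{n+1} − oa_n = (1 − dS)(x₀ − oa_n) − ½ x₀² dT^{n+1} (1 − dS^n) < 0`.
-/

open Real Filter

/-- The inhomogeneous linear "secant-line" approximation:
`oa₀ = 0`, `oa_n = c + d_S·oa_{n−1} − (1/2)·x₀²·d_T^n·(1 − d_S^{n−1})` (with `c = q − β`). -/
noncomputable def oaSeq (c dS dT x₀ : ℝ) : ℕ → ℝ
  | 0 => 0
  | n + 1 => c + dS * oaSeq c dS dT x₀ n - (1 / 2) * x₀ ^ 2 * dT ^ (n + 1) * (1 - dS ^ n)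

open Set Function Topology

theorem ConvexOn.le_secant_sub_sq {s : Set ℝ} {f : ℝ → ℝ} {m a b x : ℝ}
    (hf : ConvexOn ℝ s fun x => f x - m / 2 * x ^ 2) (ha : a ∈ s) (hb : b ∈ s) (hab : a < b)
    (hx : x ∈ Icc a b) :
    f x ≤ ((b - x) * f a + (x - a) * f b) / (b - a) - m / 2 * ((x - a) * (b - x)) := by
  have hba : 0 < b - a := sub_pos.2 hab
  have key := hf.2 ha hb (div_nonneg (sub_nonneg.2 hx.2) hba.le)
    (div_nonneg (sub_nonneg.2 hx.1) hba.le) (by field_simp; ring)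
  have hx' : (b - x) / (b - a) * a + (x - a) / (b - a) * b = x := by field_simp; ring
  simp only [smul_eq_mul, hx'] at key
  rw [le_sub_iff_add_le, le_div_iff₀ hba]
  have hμ : (b - x) / (b - a) * (b - a) = b - x := div_mul_cancel₀ _ hba.ne'
  have hν : (x - a) / (b - a) * (b - a) = x - a := div_mul_cancel₀ _ hba.ne'
  linear_combination (b - a) * key + (f a - m / 2 * a ^ 2) * hμ + (f b - m / 2 * b ^ 2) * hν

theorem convexOn_mul_exp_sub_sq {q m c : ℝ} (hq : 0 ≤ q) (hm : m ≤ q * exp c) :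
    ConvexOn ℝ (Ici c) fun x => q * exp x - m / 2 * x ^ 2 := by
  refine convexOn_of_hasDerivWithinAt2_nonneg (convex_Ici c) (f' := fun x => q * exp x - m * x)
    (f'' := fun x => q * exp x - m) (by fun_prop) (fun x _ => ?_) (fun x _ => ?_) (fun x hx => ?_)
  · have := ((hasDerivAt_exp x).const_mul q).sub ((hasDerivAt_pow 2 x).const_mul (m / 2))
    exact (this.congr_deriv (by ring)).hasDerivWithinAt
  · have := ((hasDerivAt_exp x).const_mul q).sub ((hasDerivAt_id x).const_mul m)
    exact (this.congr_deriv (by simp)).hasDerivWithinAt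
  · rw [interior_Ici] at hx
    have := mul_le_mul_of_nonneg_left (exp_le_exp.2 (le_of_lt hx)) hq
    linarith

theorem tendsto_add_mul_pow_nhds {x c r : ℝ} (h₀ : 0 ≤ r) (h₁ : r < 1) :
    Tendsto (fun n : ℕ => x + c * r ^ n) atTop (𝓝 x) := by
  simpa using ((tendsto_pow_atTop_nhds_zero_of_lt_one h₀ h₁).const_mul c).const_add x

theorem oaSeq_one (c dS dT x₀ : ℝ) : oaSeq c dS dT x₀ 1 = c := by
  simp [oaSeq]

theorem oaSeq_succ_sub (x₀ dS dT : ℝ) (n : ℕ) :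
    oaSeq (x₀ * (1 - dS)) dS dT x₀ (n + 1) - x₀ =
      dS * (oaSeq (x₀ * (1 - dS)) dS dT x₀ n - x₀)
        - 1 / 2 * x₀ ^ 2 * dT ^ (n + 1) * (1 - dS ^ n) := by
  rw [oaSeq]
  ring

/-- Abstracts `f x = q e^x − β`; the curvature term in `le_secant` comes from `f'' ≥ f'(x₀) = dT`
on `[x₀, 0]`. -/
structure TangentSecantBounds (f : ℝ → ℝ) (x₀ dT dS : ℝ) : Prop where
  neg : x₀ < 0
  dT_pos : 0 < dT
  dT_lt_dS : dT < dS
  dS_lt_one : dS < 1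
  map_zero : f 0 = x₀ * (1 - dS)
  tangent_le : ∀ x, dT * (x - x₀) ≤ f x - x₀
  le_secant : ∀ x ∈ Icc x₀ 0, f x - x₀ ≤ dS * (x - x₀) - dT / 2 * ((x - x₀) * -x)

namespace TangentSecantBounds

variable {f : ℝ → ℝ} {x₀ dT dS : ℝ}

theorem dS_pos (h : TangentSecantBounds f x₀ dT dS) : 0 < dS :=
  h.dT_pos.trans h.dT_lt_dS

theorem sub_le_mul_sub (h : TangentSecantBounds f x₀ dT dS) {x : ℝ} (hx : x ∈ Icc x₀ 0) :
    f x - x₀ ≤ dS * (x - x₀) := by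
  have : 0 ≤ dT / 2 * ((x - x₀) * -x) :=
    mul_nonneg (by linarith [h.dT_pos]) (mul_nonneg (by linarith [hx.1]) (by linarith [hx.2]))
  linarith [h.le_secant x hx]

theorem mapsTo_Icc (h : TangentSecantBounds f x₀ dT dS) : MapsTo f (Icc x₀ 0) (Icc x₀ 0) := by
  intro x hx
  have h₁ := h.tangent_le x
  have h₂ := h.sub_le_mul_sub hx
  constructor
  · nlinarith [h.dT_pos, hx.1]
  · nlinarith [h.dS_pos, h.dS_lt_one, h.neg, hx.2]

theorem iterate_mem_Icc (h : TangentSecantBounds f x₀ dT dS) (n : ℕ) : f^[n] 0 ∈ Icc x₀ 0 :=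
  h.mapsTo_Icc.iterate n ⟨h.neg.le, le_rfl⟩

theorem mul_pow_lt_iterate_sub (h : TangentSecantBounds f x₀ dT dS) {n : ℕ} (hn : 1 ≤ n) :
    -x₀ * dT ^ n < f^[n] 0 - x₀ := by
  induction n, hn using Nat.le_induction with
  | base =>
    rw [iterate_one, h.map_zero]
    nlinarith [h.neg, h.dT_lt_dS]
  | succ n _ ih =>
    rw [iterate_succ_apply']
    calc -x₀ * dT ^ (n + 1) = dT * (-x₀ * dT ^ n) := by ring
      _ < dT * (f^[n] 0 - x₀) := mul_lt_mul_of_pos_left ih h.dT_pos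
      _ ≤ _ := h.tangent_le _

theorem mul_pow_le_iterate_sub (h : TangentSecantBounds f x₀ dT dS) (n : ℕ) :
    -x₀ * dT ^ n ≤ f^[n] 0 - x₀ := by
  rcases n.eq_zero_or_pos with rfl | hn
  · simp
  · exact (h.mul_pow_lt_iterate_sub hn).le

theorem iterate_sub_le (h : TangentSecantBounds f x₀ dT dS) (n : ℕ) :
    f^[n] 0 - x₀ ≤ -x₀ * dS ^ n := by
  have := le_geom (u := fun k => f^[k] 0 - x₀) h.dS_pos.le n fun k _ => by
    simpa only [iterate_succ_apply'] using h.sub_le_mul_sub (h.iterate_mem_Icc k)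
  simpa [mul_comm] using this

theorem tendsto_iterate (h : TangentSecantBounds f x₀ dT dS) :
    Tendsto (fun n => f^[n] 0) atTop (𝓝 x₀) :=
  tendsto_of_tendsto_of_tendsto_of_le_of_le
    (tendsto_add_mul_pow_nhds (c := -x₀) h.dT_pos.le (h.dT_lt_dS.trans h.dS_lt_one))
    (tendsto_add_mul_pow_nhds (c := -x₀) h.dS_pos.le h.dS_lt_one)
    (fun n => by linarith [h.mul_pow_le_iterate_sub n])
    (fun n => by linarith [h.iterate_sub_le n])

theorem sq_mul_pow_le_mul (h : TangentSecantBounds f x₀ dT dS) (n : ℕ) :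
    x₀ ^ 2 * dT ^ n * (1 - dS ^ n) ≤ (f^[n] 0 - x₀) * -f^[n] 0 := by
  have hdSn : dS ^ n ≤ 1 := pow_le_one₀ h.dS_pos.le h.dS_lt_one.le
  calc x₀ ^ 2 * dT ^ n * (1 - dS ^ n) = (-x₀ * dT ^ n) * (-x₀ * (1 - dS ^ n)) := by ring
    _ ≤ (f^[n] 0 - x₀) * -f^[n] 0 :=
      mul_le_mul (h.mul_pow_le_iterate_sub n) (by linarith [h.iterate_sub_le n])
        (mul_nonneg (by linarith [h.neg]) (by linarith)) (by linarith [(h.iterate_mem_Icc n).1])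

theorem sq_mul_pow_lt_mul (h : TangentSecantBounds f x₀ dT dS) {n : ℕ} (hn : 1 ≤ n) :
    x₀ ^ 2 * dT ^ n * (1 - dS ^ n) < (f^[n] 0 - x₀) * -f^[n] 0 := by
  have hdSn : dS ^ n < 1 := pow_lt_one₀ h.dS_pos.le h.dS_lt_one (by omega)
  calc x₀ ^ 2 * dT ^ n * (1 - dS ^ n) = (-x₀ * dT ^ n) * (-x₀ * (1 - dS ^ n)) := by ring
    _ < (f^[n] 0 - x₀) * -f^[n] 0 :=
      mul_lt_mul (h.mul_pow_lt_iterate_sub hn) (by linarith [h.iterate_sub_le n])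
        (mul_pos (by linarith [h.neg]) (by linarith)) (by linarith [(h.iterate_mem_Icc n).1])

theorem iterate_succ_sub_le (h : TangentSecantBounds f x₀ dT dS) (n : ℕ) :
    f^[n + 1] 0 - x₀ ≤ dS * (f^[n] 0 - x₀) - 1 / 2 * x₀ ^ 2 * dT ^ (n + 1) * (1 - dS ^ n) := by
  rw [iterate_succ_apply']
  linear_combination h.le_secant _ (h.iterate_mem_Icc n)
    + 1 / 2 * mul_le_mul_of_nonneg_left (h.sq_mul_pow_le_mul n) h.dT_pos.le

theorem iterate_succ_sub_lt (h : TangentSecantBounds f x₀ dT dS) {n : ℕ} (hn : 1 ≤ n) :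
    f^[n + 1] 0 - x₀ < dS * (f^[n] 0 - x₀) - 1 / 2 * x₀ ^ 2 * dT ^ (n + 1) * (1 - dS ^ n) := by
  rw [iterate_succ_apply']
  linear_combination h.le_secant _ (h.iterate_mem_Icc n)
    + 1 / 2 * mul_lt_mul_of_pos_left (h.sq_mul_pow_lt_mul hn) h.dT_pos

theorem oaSeq_sub_le (h : TangentSecantBounds f x₀ dT dS) (n : ℕ) :
    oaSeq (x₀ * (1 - dS)) dS dT x₀ n - x₀ ≤ -x₀ * dS ^ n := by
  induction n with
  | zero => simp [oaSeq]
  | succ n ih =>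
    have hcorr : 0 ≤ 1 / 2 * x₀ ^ 2 * dT ^ (n + 1) * (1 - dS ^ n) :=
      mul_nonneg (by positivity [h.dT_pos.le])
        (sub_nonneg.2 (pow_le_one₀ h.dS_pos.le h.dS_lt_one.le))
    rw [oaSeq_succ_sub]
    linear_combination mul_le_mul_of_nonneg_left ih h.dS_pos.le + hcorr

theorem iterate_le_oaSeq (h : TangentSecantBounds f x₀ dT dS) (n : ℕ) :
    f^[n] 0 ≤ oaSeq (x₀ * (1 - dS)) dS dT x₀ n := by
  induction n with
  | zero => simp [oaSeq]
  | succ n ih =>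
    have := mul_le_mul_of_nonneg_left (sub_le_sub_right ih x₀) h.dS_pos.le
    linarith [h.iterate_succ_sub_le n, oaSeq_succ_sub x₀ dS dT n]

theorem iterate_lt_oaSeq (h : TangentSecantBounds f x₀ dT dS) {n : ℕ} (hn : 2 ≤ n) :
    f^[n] 0 < oaSeq (x₀ * (1 - dS)) dS dT x₀ n := by
  obtain ⟨n, rfl⟩ : ∃ k, n = k + 1 := ⟨n - 1, by omega⟩
  have := mul_le_mul_of_nonneg_left (sub_le_sub_right (h.iterate_le_oaSeq n) x₀) h.dS_pos.le
  linarith [h.iterate_succ_sub_lt (by omega : 1 ≤ n), oaSeq_succ_sub x₀ dS dT n]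

theorem oaSeq_eq_iterate_iff (h : TangentSecantBounds f x₀ dT dS) {n : ℕ} (hn : 1 ≤ n) :
    oaSeq (x₀ * (1 - dS)) dS dT x₀ n = f^[n] 0 ↔ n = 1 := by
  refine ⟨fun heq => ?_, ?_⟩
  · by_contra hn1
    exact (h.iterate_lt_oaSeq (by omega)).ne' heq
  · rintro rfl
    rw [oaSeq_one, iterate_one, h.map_zero]

theorem oaSeq_succ_lt (h : TangentSecantBounds f x₀ dT dS) {n : ℕ} (hn : 1 ≤ n) :
    oaSeq (x₀ * (1 - dS)) dS dT x₀ (n + 1) < oaSeq (x₀ * (1 - dS)) dS dT x₀ n := by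
  have hcorr : 0 ≤ 1 / 2 * x₀ ^ 2 * dT ^ (n + 1) * (1 - dS ^ n) :=
    mul_nonneg (by positivity [h.dT_pos.le])
      (sub_nonneg.2 (pow_le_one₀ h.dS_pos.le h.dS_lt_one.le))
  have hgt : x₀ < oaSeq (x₀ * (1 - dS)) dS dT x₀ n := by
    linarith [h.mul_pow_lt_iterate_sub hn, h.iterate_le_oaSeq n,
      mul_pos (neg_pos.2 h.neg) (pow_pos h.dT_pos n)]
  linarith [oaSeq_succ_sub x₀ dS dT n, mul_pos (sub_pos.2 h.dS_lt_one) (sub_pos.2 hgt)]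

theorem tendsto_oaSeq (h : TangentSecantBounds f x₀ dT dS) :
    Tendsto (oaSeq (x₀ * (1 - dS)) dS dT x₀) atTop (𝓝 x₀) :=
  tendsto_of_tendsto_of_tendsto_of_le_of_le h.tendsto_iterate
    (tendsto_add_mul_pow_nhds (c := -x₀) h.dS_pos.le h.dS_lt_one)
    h.iterate_le_oaSeq (fun n => by linarith [h.oaSeq_sub_le n])

end TangentSecantBounds

theorem aSeq_eq_iterate (q β : ℝ) (n : ℕ) : aSeq q β n = (fun x => q * exp x - β)^[n] 0 := by
  induction n with
  | zero => rfl
  | succ n ih => rw [iterate_succ_apply', ← ih, aSeq]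

theorem tangentSecantBounds_mul_exp_sub {q β x₀ : ℝ} (hq : 0 < q) (hqβ : q < β) (hx₀ : x₀ < 0)
    (hfix : q * exp x₀ - β = x₀) :
    TangentSecantBounds (fun x => q * exp x - β) x₀ (q * exp x₀) ((x₀ - (q - β)) / x₀) := by
  have hexp_sub (x : ℝ) : q * exp x = q * exp x₀ * exp (x - x₀) := by
    rw [mul_assoc, ← exp_add, add_sub_cancel]
  refine ⟨hx₀, by positivity, ?_, (div_lt_one_of_neg hx₀).2 (by linarith), ?_, fun x => ?_,
    fun x hx => ?_⟩
  · rw [lt_div_iff_of_neg hx₀]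
    have h₁ := mul_lt_mul_of_pos_left (one_sub_lt_exp_neg hx₀.ne) (mul_pos hq (exp_pos x₀))
    have h₂ := hexp_sub 0
    rw [exp_zero, mul_one, zero_sub] at h₂
    linarith
  · rw [exp_zero, mul_one]
    field_simp [hx₀.ne]
    ring
  · have := mul_le_mul_of_nonneg_left (add_one_le_exp (x - x₀)) (mul_pos hq (exp_pos x₀)).le
    rw [hexp_sub x]
    linarith
  · have hconv : ConvexOn ℝ (Icc x₀ 0) fun y => (q * exp y - β) - q * exp x₀ / 2 * y ^ 2 :=
      (((convexOn_mul_exp_sub_sq hq.le le_rfl).add_const (-β)).subset Icc_subset_Ici_self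
        (convex_Icc x₀ 0)).congr fun y _ => by simp only [Pi.add_apply]; ring
    have hsec := hconv.le_secant_sub_sq (left_mem_Icc.2 hx₀.le) (right_mem_Icc.2 hx₀.le) hx₀ hx
    have hline : ((0 - x) * (q * exp x₀ - β) + (x - x₀) * (q * exp 0 - β)) / (0 - x₀) =
        x₀ + (x₀ - (q - β)) / x₀ * (x - x₀) := by
      rw [hfix, exp_zero, mul_one]
      field_simp [hx₀.ne]
      ring
    linarith

/-- For `0 < q < β`, let `x₀ < 0` be the unique solution of
`q·e^x − β = x`, `d_T = q·e^{x₀}` and `d_S = (x₀ − (q − β))/x₀`. Then `0 < d_T < d_S < 1`,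
the secant approximation `oa` dominates `a` (with equality exactly at `n = 1`), is strictly
decreasing, and both sequences converge to `x₀`. -/
theorem aSeq_and_secant_approx (q β : ℝ) (hq : 0 < q) (hqβ : q < β)
    (x₀ : ℝ) (hx₀neg : x₀ < 0) (hx₀fix : q * Real.exp x₀ - β = x₀)
    (dT dS : ℝ) (hdT : dT = q * Real.exp x₀) (hdS : dS = (x₀ - (q - β)) / x₀) :
    (0 < dT ∧ dT < dS ∧ dS < 1) ∧
    (∀ n : ℕ, 1 ≤ n →
      aSeq q β n ≤ oaSeq (q - β) dS dT x₀ n ∧ (oaSeq (q - β) dS dT x₀ n = aSeq q β n ↔ n = 1)) ∧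
    (∀ n : ℕ, 1 ≤ n → oaSeq (q - β) dS dT x₀ (n + 1) < oaSeq (q - β) dS dT x₀ n) ∧
    (Tendsto (oaSeq (q - β) dS dT x₀) atTop (nhds x₀) ∧ Tendsto (aSeq q β) atTop (nhds x₀)) := by
  have h : TangentSecantBounds (fun x => q * exp x - β) x₀ dT dS := by
    subst hdT hdS
    exact tangentSecantBounds_mul_exp_sub hq hqβ hx₀neg hx₀fix
  have hc : q - β = x₀ * (1 - dS) := by
    rw [hdS]
    field_simp [hx₀neg.ne]
    ring
  rw [hc, show aSeq q β = fun n => _ from funext (aSeq_eq_iterate q β)]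
  exact ⟨⟨h.dT_pos, h.dT_lt_dS, h.dS_lt_one⟩,
    fun n hn => ⟨h.iterate_le_oaSeq n, h.oaSeq_eq_iterate_iff hn⟩,
    fun n hn => h.oaSeq_succ_lt hn, h.tendsto_oaSeq, h.tendsto_iterate⟩
end
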